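/- arXiv:math/0110023 — 2 statements merged into one kernel-verified Lean document; each statement's English description precedes it below -/
import Mathlib

section
/- For every integer m ≥ 0, in the East-process transition graph on finite configurations in {0,1}^(Z≥0), there exists a path of length 3^m from the configuration δ_0 (a single particle at site 0) to the configuration δ_0 + δ_{2^m} (particles at sites 0 and 2^m) such that every configuration x on the path satisfies |x| ≤ m+2, where |x| is the number of occupied sites. -/
/-- A possible transition of the East process on sites `ℕ`, with site 0 always
occupied: exactly one site `i ≥ 1` flips, and this is allowed only when site
`i-1` is occupied.  Configurations are finite sets of occupied sites. -/
def EastStep (s t : Finset ℕ) : Prop :=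
  ∃ i : ℕ, 1 ≤ i ∧ (i - 1) ∈ s ∧
    ((i ∉ s ∧ t = insert i s) ∨ (i ∈ s ∧ t = s.erase i))

lemma eastStep_symm {s t : Finset ℕ} (h : EastStep s t) : EastStep t s := by
  obtain ⟨i, hi, hprev, h⟩ := h
  rcases h with ⟨hni, rfl⟩ | ⟨hin, rfl⟩
  · exact ⟨i, hi, Finset.mem_insert_of_mem hprev,
      Or.inr ⟨Finset.mem_insert_self i s, by rw [Finset.erase_insert hni]⟩⟩
  · refine ⟨i, hi, Finset.mem_erase.mpr ⟨by omega, hprev⟩,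
      Or.inl ⟨Finset.notMem_erase i s, (Finset.insert_erase hin).symm⟩⟩

lemma eastStep_insert {s t : Finset ℕ} {a : ℕ} (h : EastStep s t)
    (has : a ∉ s) (hat : a ∉ t) : EastStep (insert a s) (insert a t) := by
  obtain ⟨i, hi, hprev, h⟩ := h
  refine ⟨i, hi, Finset.mem_insert_of_mem hprev, ?_⟩
  rcases h with ⟨hni, rfl⟩ | ⟨hin, rfl⟩
  · have hia : i ≠ a := fun h => hat (h ▸ Finset.mem_insert_self i s)
    refine Or.inl ⟨?_, Finset.insert_comm a i s⟩
    simp only [Finset.mem_insert]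
    tauto
  · have hia : i ≠ a := fun h => has (h ▸ hin)
    exact Or.inr ⟨Finset.mem_insert_of_mem hin,
      (Finset.erase_insert_of_ne (fun h => hia h.symm)).symm⟩

lemma eastStep_image {s t : Finset ℕ} (c : ℕ) (h : EastStep s t) :
    EastStep (s.image (· + c)) (t.image (· + c)) := by
  have hinj : Function.Injective (· + c : ℕ → ℕ) := add_left_injective c
  obtain ⟨i, hi, hprev, h⟩ := h
  refine ⟨i + c, by omega, ?_, ?_⟩
  · have h1 : i + c - 1 = (i - 1) + c := by omega
    rw [h1]
    exact Finset.mem_image_of_mem _ hprev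
  rcases h with ⟨hni, rfl⟩ | ⟨hin, rfl⟩
  · refine Or.inl ⟨?_, by rw [Finset.image_insert]⟩
    simp only [Finset.mem_image]
    rintro ⟨x, hx, hxe⟩
    have : x = i := by omega
    exact hni (this ▸ hx)
  · exact Or.inr ⟨Finset.mem_image_of_mem _ hin,
      Finset.image_erase hinj s i⟩

lemma east_aux (m : ℕ) :
    ∃ f : ℕ → Finset ℕ,
      f 0 = {0} ∧
      f (3 ^ m) = {0, 2 ^ m} ∧
      (∀ j < 3 ^ m, EastStep (f j) (f (j + 1))) ∧
      (∀ j ≤ 3 ^ m, (f j).card ≤ m + 2) ∧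
      (∀ j ≤ 3 ^ m, ∀ x ∈ f j, x ≤ 2 ^ m) := by
  induction m with
  | zero =>
    refine ⟨fun j => if j = 0 then {0} else {0, 1}, rfl, rfl, ?_, ?_, ?_⟩
    · intro j hj
      interval_cases j
      exact ⟨1, le_refl 1, by decide, Or.inl ⟨by decide, by decide⟩⟩
    · intro j hj
      interval_cases j <;> decide
    · intro j hj
      interval_cases j <;> decide
  | succ m ih =>
    obtain ⟨f, hf0, hf3, hstep, hcard, hbd⟩ := ih
    set c : ℕ := 2 ^ m with hc
    have hc1 : 1 ≤ c := Nat.one_le_two_pow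
    have h3 : 1 ≤ 3 ^ m := Nat.one_le_pow _ _ (by norm_num)
    have h3s : (3 : ℕ) ^ (m + 1) = 3 * 3 ^ m := by ring
    have h2s : (2 : ℕ) ^ (m + 1) = 2 * c := by rw [hc]; ring
    set g : ℕ → Finset ℕ := fun j =>
      if j < 3 ^ m then f j
      else if j < 2 * 3 ^ m then insert 0 ((f (j - 3 ^ m)).image (· + c))
      else insert (2 * c) (f (3 * 3 ^ m - j)) with hg
    -- boundary agreements
    have hb1 : insert 0 ((f 0).image (· + c)) = f (3 ^ m) := by
      rw [hf0, hf3, Finset.image_singleton]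
      simp
    have hb2 : insert (2 * c) (f (3 ^ m)) = insert 0 ((f (3 ^ m)).image (· + c)) := by
      rw [hf3]
      ext x
      simp only [Finset.mem_insert, Finset.mem_image, Finset.mem_singleton]
      constructor
      · rintro (rfl | rfl | rfl)
        · exact Or.inr ⟨c, Or.inr rfl, by omega⟩
        · exact Or.inl rfl
        · exact Or.inr ⟨0, Or.inl rfl, by omega⟩
      · rintro (rfl | ⟨y, (rfl | rfl), rfl⟩) <;> omega
    have hzero_img : ∀ k, (0 : ℕ) ∉ (f k).image (· + c) := by
      intro k h
      simp only [Finset.mem_image] at h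
      obtain ⟨x, _, hx⟩ := h
      omega
    refine ⟨g, ?_, ?_, ?_, ?_, ?_⟩
    · show g 0 = {0}
      simp only [hg]
      rw [if_pos (by omega : 0 < 3 ^ m)]
      exact hf0
    · show g (3 ^ (m + 1)) = {0, 2 ^ (m + 1)}
      simp only [hg]
      simp only [h3s]
      rw [if_neg (by omega), if_neg (by omega)]
      have : 3 * 3 ^ m - 3 * 3 ^ m = 0 := by omega
      rw [this, hf0, h2s]
      exact Finset.pair_comm (2 * c) 0
    · intro j hj
      rw [h3s] at hj
      show EastStep (g j) (g (j + 1))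
      rcases lt_or_ge (j + 1) (3 ^ m) with h1 | h1
      · simp only [hg]
        simp only [if_pos (by omega : j < 3 ^ m), if_pos h1]
        exact hstep j (by omega)
      rcases eq_or_lt_of_le h1 with h1 | h1
      · -- j + 1 = 3 ^ m
        simp only [hg]
        simp only [if_pos (by omega : j < 3 ^ m), if_neg (by omega : ¬ j + 1 < 3 ^ m),
          if_pos (by omega : j + 1 < 2 * 3 ^ m)]
        have : j + 1 - 3 ^ m = 0 := by omega
        rw [this, hb1, h1]
        exact hstep j (by omega)
      rcases lt_or_ge (j + 1) (2 * 3 ^ m) with h2 | h2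
      · -- phase 2 interior
        simp only [hg]
        simp only [if_neg (by omega : ¬ j < 3 ^ m), if_pos (by omega : j < 2 * 3 ^ m),
          if_neg (by omega : ¬ j + 1 < 3 ^ m), if_pos h2]
        have he : j + 1 - 3 ^ m = (j - 3 ^ m) + 1 := by omega
        rw [he]
        exact eastStep_insert (eastStep_image c (hstep _ (by omega)))
          (hzero_img _) (hzero_img _)
      rcases eq_or_lt_of_le h2 with h2 | h2
      · -- j + 1 = 2 * 3 ^ m
        simp only [hg]
        simp only [if_neg (by omega : ¬ j < 3 ^ m), if_pos (by omega : j < 2 * 3 ^ m),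
          if_neg (by omega : ¬ j + 1 < 3 ^ m), if_neg (by omega : ¬ j + 1 < 2 * 3 ^ m)]
        have he : 3 * 3 ^ m - (j + 1) = 3 ^ m := by omega
        rw [he, hb2]
        have he2 : (3 : ℕ) ^ m = (j - 3 ^ m) + 1 := by omega
        rw [congrArg f he2]
        exact eastStep_insert (eastStep_image c (hstep _ (by omega)))
          (hzero_img _) (hzero_img _)
      · -- phase 3
        simp only [hg]
        simp only [if_neg (by omega : ¬ j < 3 ^ m), if_neg (by omega : ¬ j < 2 * 3 ^ m),
          if_neg (by omega : ¬ j + 1 < 3 ^ m), if_neg (by omega : ¬ j + 1 < 2 * 3 ^ m)]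
        set k : ℕ := 3 * 3 ^ m - (j + 1) with hk
        have hk3 : k < 3 ^ m := by omega
        have he : 3 * 3 ^ m - j = k + 1 := by omega
        rw [he]
        have hnot : ∀ l ≤ 3 ^ m, 2 * c ∉ f l := by
          intro l hl h
          have := hbd l hl _ h
          omega
        exact eastStep_insert (eastStep_symm (hstep k hk3))
          (hnot _ (by omega)) (hnot _ (by omega))
    · intro j hj
      rw [h3s] at hj
      show (g j).card ≤ m + 1 + 2
      simp only [hg]
      split_ifs with h1 h2
      · have := hcard j (by omega); omega
      · calc (insert 0 ((f (j - 3 ^ m)).image (· + c))).card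
            ≤ ((f (j - 3 ^ m)).image (· + c)).card + 1 := Finset.card_insert_le _ _
          _ ≤ (f (j - 3 ^ m)).card + 1 := by
              have := Finset.card_image_le (f := (· + c)) (s := f (j - 3 ^ m)); omega
          _ ≤ m + 1 + 2 := by have := hcard (j - 3 ^ m) (by omega); omega
      · calc (insert (2 * c) (f (3 * 3 ^ m - j))).card
            ≤ (f (3 * 3 ^ m - j)).card + 1 := Finset.card_insert_le _ _
          _ ≤ m + 1 + 2 := by have := hcard (3 * 3 ^ m - j) (by omega); omega
    · intro j hj x hx
      rw [h3s] at hj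
      rw [h2s]
      simp only [hg] at hx
      split_ifs at hx with h1 h2
      · have := hbd j (by omega) x hx; omega
      · rcases Finset.mem_insert.mp hx with rfl | hx
        · omega
        · simp only [Finset.mem_image] at hx
          obtain ⟨y, hy, rfl⟩ := hx
          have := hbd (j - 3 ^ m) (by omega) y hy
          omega
      · rcases Finset.mem_insert.mp hx with rfl | hx
        · omega
        · have := hbd (3 * 3 ^ m - j) (by omega) x hx; omega

theorem east_path_exists (m : ℕ) :
    ∃ f : ℕ → Finset ℕ,
      f 0 = {0} ∧
      f (3 ^ m) = {0, 2 ^ m} ∧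
      (∀ j < 3 ^ m, EastStep (f j) (f (j + 1))) ∧
      (∀ j ≤ 3 ^ m, (f j).card ≤ m + 2) := by
  obtain ⟨f, h0, h3, hs, hc, _⟩ := east_aux m
  exact ⟨f, h0, h3, hs, hc⟩
end

section
/- Define α(p) = (p·(a+1))^{m₀/2 − 1} where a = ⌈4·log(1/p)⌉ and m₀ = max{m : 2^m·(a+1) ≤ (n−a)/2} with n = ⌊1/p⌋. Then log α(p) ∼ −log²(1/p)/(2·log 2) as p → 0⁺. -/
open Filter

/-- `a(p) = ⌈4 log(1/p)⌉`. -/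
noncomputable def aParam (p : ℝ) : ℕ := ⌈4 * Real.log (1 / p)⌉₊

/-- `n(p) = ⌊1/p⌋`. -/
noncomputable def nParam (p : ℝ) : ℕ := ⌊1 / p⌋₊

/-- `m₀(p) = max{m : 2^m (a+1) ≤ (n-a)/2}`. -/
noncomputable def m0Param (p : ℝ) : ℕ :=
  sSup {m : ℕ | (2 : ℝ) ^ m * ((aParam p : ℝ) + 1) ≤ ((nParam p : ℝ) - (aParam p : ℝ)) / 2}

/-- `α(p) = (p (a+1))^{m₀/2 - 1}`. -/
noncomputable def alphaParam (p : ℝ) : ℝ :=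
  (p * ((aParam p : ℝ) + 1)) ^ ((m0Param p : ℝ) / 2 - 1)

/-! Write `L = log (1/p)`, so that `log α = -(m₀ - 2)/2 · (L - log (a + 1))`. Since `a ≈ 4L`
and `1/p ≈ n`, maximality of `m₀` pins `2^m₀` between `1/(48 p L)` and `1/p`, whence
`m₀ log 2 = L - O(log L)`; together with `log (a + 1) = O(log L)` this gives
`log α = -L² / (2 log 2) · (1 + O(log L / L))`. -/

open Real Topology

section PowTwoMul

variable {c x : ℝ}

lemma bddAbove_setOf_two_pow_mul_le (hc : 0 < c) (x : ℝ) :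
    BddAbove {m : ℕ | (2 : ℝ) ^ m * c ≤ x} := by
  refine ⟨⌈x / c⌉₊, fun m (hm : (2 : ℝ) ^ m * c ≤ x) => ?_⟩
  have hm_lt : (m : ℝ) < 2 ^ m := by exact_mod_cast Nat.lt_two_pow_self
  have hpow_le : (2 : ℝ) ^ m ≤ x / c := (le_div_iff₀ hc).2 hm
  exact_mod_cast (hm_lt.trans_le (hpow_le.trans (Nat.le_ceil _))).le

lemma two_pow_sSup_mul_le (hc : 0 < c) (hx : c ≤ x) :
    (2 : ℝ) ^ sSup {m : ℕ | (2 : ℝ) ^ m * c ≤ x} * c ≤ x :=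
  Nat.sSup_mem ⟨0, by simpa using hx⟩ (bddAbove_setOf_two_pow_mul_le hc x)

lemma lt_two_pow_sSup_succ_mul (hc : 0 < c) (x : ℝ) :
    x < (2 : ℝ) ^ (sSup {m : ℕ | (2 : ℝ) ^ m * c ≤ x} + 1) * c :=
  not_le.1 fun h => (Nat.lt_succ_self _).not_ge (le_csSup (bddAbove_setOf_two_pow_mul_le hc x) h)

end PowTwoMul

lemma tendsto_sub_log_sub_div_self_atTop (C : ℝ) :
    Tendsto (fun x => (x - log x - C) / x) atTop (𝓝 1) := by
  have hlog : Tendsto (fun x => log x / x) atTop (𝓝 0) :=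
    isLittleO_log_id_atTop.tendsto_div_nhds_zero
  have hC : Tendsto (fun x => C / x) atTop (𝓝 0) := tendsto_const_nhds.div_atTop tendsto_id
  have hlim := (tendsto_const_nhds (x := (1 : ℝ))).sub (hlog.add hC)
  rw [add_zero, sub_zero] at hlim
  refine hlim.congr' ?_
  filter_upwards [eventually_ne_atTop 0] with x hx
  field_simp
  ring

lemma tendsto_log_one_div_nhdsGT_zero : Tendsto (fun p : ℝ => log (1 / p)) (𝓝[>] 0) atTop := by
  simp only [one_div]
  exact tendsto_log_atTop.comp tendsto_inv_nhdsGT_zero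

section SmallP

variable {p : ℝ}

lemma aParam_bounds (hL : 0 ≤ log (1 / p)) :
    4 * log (1 / p) ≤ aParam p ∧ (aParam p : ℝ) < 4 * log (1 / p) + 1 :=
  ⟨Nat.le_ceil _, Nat.ceil_lt_add_one (by positivity)⟩

lemma nParam_bounds (hp : 0 < p) : 1 / p - 1 < nParam p ∧ (nParam p : ℝ) ≤ 1 / p := by
  have hfloor : 1 / p < nParam p + 1 := Nat.lt_floor_add_one _
  exact ⟨by linarith, Nat.floor_le (by positivity)⟩

lemma log_aParam_succ_le (hL : 1 ≤ log (1 / p)) :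
    log (aParam p + 1) ≤ log (log (1 / p)) + log 6 := by
  rw [← log_mul (by positivity) (by positivity)]
  exact log_le_log (by positivity) (by linarith [aParam_bounds (by linarith : 0 ≤ log (1 / p))])

lemma log_alphaParam (hp : 0 < p) :
    log (alphaParam p) = -(((m0Param p : ℝ) - 2) / 2) * (log (1 / p) - log (aParam p + 1)) := by
  rw [alphaParam, log_rpow (by positivity), log_mul hp.ne' (by positivity), one_div, log_inv]
  ring

variable (hp : 0 < p) (hL : 23 ≤ log (1 / p))
include hp hL

lemma twelve_mul_log_one_div_add_six_le : 12 * log (1 / p) + 6 ≤ 1 / p := by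
  have hexp := quadratic_le_exp_of_nonneg (x := log (1 / p)) (by linarith)
  rw [exp_log (one_div_pos.2 hp)] at hexp
  nlinarith

lemma aParam_succ_le_nParam_sub_div_two :
    (aParam p : ℝ) + 1 ≤ ((nParam p : ℝ) - aParam p) / 2 := by
  linarith [aParam_bounds (by linarith : 0 ≤ log (1 / p)), nParam_bounds hp,
    twelve_mul_log_one_div_add_six_le hp hL]

lemma m0Param_mul_log_two_le : (m0Param p : ℝ) * log 2 ≤ log (1 / p) := by
  have hspec : (2 : ℝ) ^ m0Param p * (aParam p + 1) ≤ ((nParam p : ℝ) - aParam p) / 2 :=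
    two_pow_sSup_mul_le (by positivity) (aParam_succ_le_nParam_sub_div_two hp hL)
  have hpow : (2 : ℝ) ^ m0Param p ≤ 1 / p := by
    nlinarith [nParam_bounds hp, (Nat.cast_nonneg _ : (0 : ℝ) ≤ aParam p),
      pow_pos (two_pos : (0 : ℝ) < 2) (m0Param p)]
  rw [← log_pow]
  exact log_le_log (by positivity) hpow

lemma log_one_div_sub_log_sub_le_m0Param :
    log (1 / p) - log (log (1 / p)) - log 192 ≤ ((m0Param p : ℝ) - 2) * log 2 := by
  have hspec : ((nParam p : ℝ) - aParam p) / 2 < 2 ^ (m0Param p + 1) * (aParam p + 1) :=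
    lt_two_pow_sSup_succ_mul (by positivity) _
  obtain ⟨-, ha_lt⟩ := aParam_bounds (by linarith : 0 ≤ log (1 / p))
  have hmul : (2 : ℝ) ^ m0Param p * (aParam p + 1) ≤ 2 ^ m0Param p * (6 * log (1 / p)) :=
    mul_le_mul_of_nonneg_left (by linarith) (by positivity)
  have hlt : 1 / p < 2 ^ m0Param p * 48 * log (1 / p) := by
    rw [pow_succ] at hspec
    nlinarith [nParam_bounds hp, twelve_mul_log_one_div_add_six_le hp hL]
  have hlog := log_lt_log (by positivity) hlt
  rw [log_mul (by positivity) (by positivity), log_mul (by positivity) (by positivity),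
    log_pow] at hlog
  have h192 : log 192 = log 48 + 2 * log 2 := by
    rw [show (192 : ℝ) = 48 * 2 ^ 2 by norm_num, log_mul (by norm_num) (by norm_num), log_pow]
    norm_num
  linarith

end SmallP

lemma eventually_pos_and_le_log_one_div (c : ℝ) :
    ∀ᶠ p : ℝ in 𝓝[>] 0, 0 < p ∧ c ≤ log (1 / p) :=
  Eventually.and self_mem_nhdsWithin (tendsto_log_one_div_nhdsGT_zero.eventually_ge_atTop c)

lemma tendsto_m0Param_sub_two_mul_log_two_div :
    Tendsto (fun p => ((m0Param p : ℝ) - 2) * log 2 / log (1 / p)) (𝓝[>] 0) (𝓝 1) := by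
  refine tendsto_of_tendsto_of_tendsto_of_le_of_le'
    ((tendsto_sub_log_sub_div_self_atTop (log 192)).comp tendsto_log_one_div_nhdsGT_zero)
    tendsto_const_nhds ?_ ?_ <;>
  filter_upwards [eventually_pos_and_le_log_one_div 23] with p ⟨hp, hL⟩
  · exact div_le_div_of_nonneg_right (log_one_div_sub_log_sub_le_m0Param hp hL) (by linarith)
  · rw [div_le_one (by linarith)]
    nlinarith [m0Param_mul_log_two_le hp hL, log_pos one_lt_two]

lemma tendsto_log_one_div_sub_log_aParam_succ_div :
    Tendsto (fun p => (log (1 / p) - log (aParam p + 1)) / log (1 / p)) (𝓝[>] 0) (𝓝 1) := by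
  refine tendsto_of_tendsto_of_tendsto_of_le_of_le'
    ((tendsto_sub_log_sub_div_self_atTop (log 6)).comp tendsto_log_one_div_nhdsGT_zero)
    tendsto_const_nhds ?_ ?_ <;>
  filter_upwards [tendsto_log_one_div_nhdsGT_zero.eventually_ge_atTop 1] with p hL
  · exact div_le_div_of_nonneg_right (by linarith [log_aParam_succ_le hL]) (by linarith)
  · rw [div_le_one (by linarith)]
    linarith [log_nonneg (by simp : (1 : ℝ) ≤ aParam p + 1)]

theorem log_alpha_asymptotics :
    Tendsto
      (fun p : ℝ => Real.log (alphaParam p) / (-(Real.log (1 / p)) ^ 2 / (2 * Real.log 2)))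
      (nhdsWithin 0 (Set.Ioi 0)) (nhds 1) := by
  have hprod := tendsto_m0Param_sub_two_mul_log_two_div.mul
    tendsto_log_one_div_sub_log_aParam_succ_div
  rw [mul_one] at hprod
  refine hprod.congr' ?_
  filter_upwards [eventually_pos_and_le_log_one_div 1] with p ⟨hp, hL⟩
  have hL0 : log (1 / p) ≠ 0 := by linarith
  have hlog2 : log 2 ≠ 0 := (log_pos one_lt_two).ne'
  rw [log_alphaParam hp]
  field_simp
end
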